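/- If a crowded topological space Y can be written as the union of at most n hereditarily irresolvable subspaces, then Y is not (n+1)-resolvable. Consequently, if a space is the disjoint union of n dense submaximal subspaces, then it contains no (n+1)-resolvable subspace. -/

import Mathlib

/-!
Suppose `n` hereditarily irresolvable sets `A i` cover `Y` and `D 0, …, D n` are disjoint dense
sets. For each `j` the closed sets `closure (A i ∩ D j)` cover `Y`, so the union of their
interiors is dense; intersecting over the finitely many `j` we find a point `x` which, for every
`j`, lies in the interior of some `closure (A (f j) ∩ D j)`. By pigeonhole `f j = f k` for some
`j ≠ k`, and near `x` the traces of `D j` and `D k` on `A (f j)` are two disjoint dense subsets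
of their union, which is therefore crowded: this contradicts hereditary irresolvability.
Submaximal sets are hereditarily irresolvable, and the argument localises to any subspace.
-/

open Cardinal Set

universe u

variable {X : Type u} [TopologicalSpace X]

/-- `T` is a dense subset of the subspace `S`. -/
def DenseIn (T S : Set X) : Prop := T ⊆ S ∧ S ⊆ closure T

/-- `S` is crowded (dense-in-itself): it has no isolated points. -/
def Crowded (S : Set X) : Prop := ∀ x ∈ S, x ∈ closure (S \ {x})

/-- `A` is hereditarily irresolvable: no nonempty crowded subspace of `A` contains two
disjoint dense subsets. -/
def HeredIrres (A : Set X) : Prop :=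
  ∀ B ⊆ A, B.Nonempty → Crowded B →
    ¬ ∃ T₁ T₂ : Set X, DenseIn T₁ B ∧ DenseIn T₂ B ∧ Disjoint T₁ T₂

/-- The subspace `A` is `μ`-resolvable: it contains `μ` pairwise disjoint dense
subsets. -/
def ResolvCard (μ : Cardinal.{u}) (A : Set X) : Prop :=
  ∃ 𝒮 : Set (Set X), #↥𝒮 = μ ∧ 𝒮.PairwiseDisjoint id ∧ ∀ T ∈ 𝒮, DenseIn T A

/-- The subspace `A` is submaximal: every dense subset of `A` is relatively open. -/
def SubmaximalIn (A : Set X) : Prop :=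
  ∀ T : Set X, DenseIn T A → ∃ U : Set X, IsOpen U ∧ T = U ∩ A

open Function

section FiniteDense

variable {ι : Type*} [Finite ι]

theorem dense_iInter_of_isOpen_of_finite {f : ι → Set X} (ho : ∀ i, IsOpen (f i))
    (hd : ∀ i, Dense (f i)) : Dense (⋂ i, f i) := by
  classical
  have : Fintype ι := Fintype.ofFinite ι
  suffices ∀ s : Finset ι, Dense (⋂ i ∈ s, f i) by simpa using this Finset.univ
  intro s
  induction s using Finset.induction_on with
  | empty => simp
  | insert a s _ ih =>
    rw [Finset.set_biInter_insert]
    exact (hd a).inter_of_isOpen_left ih (ho a)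

theorem dense_iUnion_interior_of_isClosed_of_finite {f : ι → Set X} (hc : ∀ i, IsClosed (f i))
    (hU : ⋃ i, f i = Set.univ) : Dense (⋃ i, interior (f i)) := by
  have hsub : ⋂ i, (frontier (f i))ᶜ ⊆ ⋃ i, interior (f i) := by
    intro x hx
    obtain ⟨i, hi⟩ := mem_iUnion.mp (hU.ge (mem_univ x))
    by_contra hint
    exact mem_iInter.mp hx i ⟨subset_closure hi, fun h => hint (mem_iUnion.mpr ⟨i, h⟩)⟩
  refine (dense_iInter_of_isOpen_of_finite (fun i => isClosed_frontier.isOpen_compl)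
    fun i => ?_).mono hsub
  exact interior_eq_empty_iff_dense_compl.mp (interior_frontier (hc i))

end FiniteDense

theorem Crowded.of_denseIn_of_disjoint {B T₁ T₂ : Set X} (h₁ : DenseIn T₁ B) (h₂ : DenseIn T₂ B)
    (hd : Disjoint T₁ T₂) : Crowded B := by
  intro x hx
  by_cases hx₁ : x ∈ T₁
  · have hx₂ : x ∉ T₂ := hd.notMem_of_mem_left hx₁
    exact closure_mono (subset_sdiff_singleton h₂.1 hx₂) (h₂.2 hx)
  · exact closure_mono (subset_sdiff_singleton h₁.1 hx₁) (h₁.2 hx)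

theorem HeredIrres.not_disjoint {A B T₁ T₂ : Set X} (hA : HeredIrres A) (hBA : B ⊆ A)
    (hB : B.Nonempty) (h₁ : DenseIn T₁ B) (h₂ : DenseIn T₂ B) : ¬ Disjoint T₁ T₂ := fun hd =>
  hA B hBA hB (.of_denseIn_of_disjoint h₁ h₂ hd) ⟨T₁, T₂, h₁, h₂, hd⟩

theorem HeredIrres.interior_closure_inter_eq_empty {A D₁ D₂ : Set X} (hA : HeredIrres A)
    (hD : Disjoint D₁ D₂) :
    interior (closure (A ∩ D₁)) ∩ interior (closure (A ∩ D₂)) = ∅ := by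
  set V := interior (closure (A ∩ D₁)) ∩ interior (closure (A ∩ D₂))
  have hV : IsOpen V := isOpen_interior.inter isOpen_interior
  have hV₁ : V ⊆ closure (V ∩ (A ∩ D₁)) := fun x hx =>
    hV.inter_closure ⟨hx, interior_subset hx.1⟩
  have hV₂ : V ⊆ closure (V ∩ (A ∩ D₂)) := fun x hx =>
    hV.inter_closure ⟨hx, interior_subset hx.2⟩
  refine eq_empty_iff_forall_notMem.mpr fun x hx => ?_
  have hB : (V ∩ (A ∩ D₁) ∪ V ∩ (A ∩ D₂)).Nonempty :=
    (closure_nonempty_iff.mp ⟨x, hV₁ hx⟩).mono subset_union_left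
  have hBV : V ∩ (A ∩ D₁) ∪ V ∩ (A ∩ D₂) ⊆ V := union_subset inter_subset_left inter_subset_left
  refine hA.not_disjoint ?_ hB ⟨subset_union_left, hBV.trans hV₁⟩
    ⟨subset_union_right, hBV.trans hV₂⟩ (hD.mono (fun y hy => hy.2.2) fun y hy => hy.2.2)
  rintro y (hy | hy) <;> exact hy.2.1

theorem exists_not_heredIrres_of_dense_of_pairwise_disjoint {Z ι κ : Type*} [TopologicalSpace Z]
    [Nonempty Z] [Finite ι] [Finite κ] (A : ι → Set Z) (hA : ⋃ i, A i = Set.univ)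
    (D : κ → Set Z) (hD : ∀ j, Dense (D j)) (hDd : Pairwise (Disjoint on D))
    (hcard : Nat.card ι < Nat.card κ) : ∃ i, ¬ HeredIrres (A i) := by
  have hcover : ∀ j, ⋃ i, closure (A i ∩ D j) = Set.univ := fun j => by
    rw [← closure_iUnion_of_finite, ← iUnion_inter, hA, univ_inter, (hD j).closure_eq]
  have hG : Dense (⋂ j, ⋃ i, interior (closure (A i ∩ D j))) :=
    dense_iInter_of_isOpen_of_finite (fun j => isOpen_iUnion fun i => isOpen_interior)
      fun j => dense_iUnion_interior_of_isClosed_of_finite (fun i => isClosed_closure) (hcover j)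
  obtain ⟨x, hx⟩ := hG.nonempty
  choose f hf using fun j => mem_iUnion.mp (mem_iInter.mp hx j)
  obtain ⟨j, k, hfjk, hjk⟩ := Function.not_injective_iff.mp
    fun hinj => hcard.not_ge (Nat.card_le_card_of_injective f hinj)
  refine ⟨f j, fun hHI => ?_⟩
  have hxk : x ∈ interior (closure (A (f j) ∩ D k)) := hfjk ▸ hf k
  exact (hHI.interior_closure_inter_eq_empty (hDd hjk)).subset ⟨hf j, hxk⟩

theorem DenseIn.image_val {S : Set X} {T B : Set S} (h : DenseIn T B) :
    DenseIn ((↑) '' T : Set X) ((↑) '' B) := by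
  refine ⟨image_mono h.1, ?_⟩
  rintro _ ⟨y, hy, rfl⟩
  exact closure_subtype.mp (h.2 hy)

theorem HeredIrres.preimage_val {S A : Set X} (hA : HeredIrres A) :
    HeredIrres ((↑) ⁻¹' A : Set S) := by
  rintro B hBA hB - ⟨T₁, T₂, h₁, h₂, hd⟩
  exact hA.not_disjoint (image_subset_iff.mpr hBA) (hB.image _) h₁.image_val h₂.image_val
    ((disjoint_image_iff Subtype.val_injective).mpr hd)

theorem exists_not_heredIrres_of_denseIn_of_pairwise_disjoint {ι κ : Type*} [Finite ι]
    [Finite κ] {S : Set X} (hS : S.Nonempty) (A : ι → Set X) (hA : S ⊆ ⋃ i, A i)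
    (D : κ → Set X) (hD : ∀ j, DenseIn (D j) S) (hDd : Pairwise (Disjoint on D))
    (hcard : Nat.card ι < Nat.card κ) : ∃ i, ¬ HeredIrres (A i) := by
  have : Nonempty S := hS.to_subtype
  have hA' : ⋃ i, ((↑) ⁻¹' A i : Set S) = Set.univ :=
    eq_univ_of_forall fun x => by simpa using hA x.2
  have hD' (j : κ) : Dense ((↑) ⁻¹' D j : Set S) := by
    rw [Subtype.dense_iff, Subtype.image_preimage_coe, inter_eq_right.mpr (hD j).1]
    exact (hD j).2
  obtain ⟨i, hi⟩ := exists_not_heredIrres_of_dense_of_pairwise_disjoint _ hA' _ hD'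
    (fun j k hjk => (hDd hjk).preimage _) hcard
  exact ⟨i, fun h => hi h.preimage_val⟩

theorem denseIn_union_diff_closure {T A : Set X} (hT : T ⊆ A) :
    DenseIn (T ∪ (A \ closure T)) A := by
  refine ⟨union_subset hT sdiff_subset, fun a ha => ?_⟩
  by_cases hc : a ∈ closure T
  · exact closure_mono subset_union_left hc
  · exact subset_closure (Or.inr ⟨ha, hc⟩)

theorem SubmaximalIn.heredIrres {A : Set X} (h : SubmaximalIn A) : HeredIrres A := by
  rintro B hBA ⟨b, hb⟩ - ⟨T₁, T₂, ⟨hT₁B, hBT₁⟩, ⟨hT₂B, hBT₂⟩, hd⟩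
  -- `U` is a neighbourhood of `T₁` whose trace on `B ⊆ closure T₁` is `T₁`, yet `T₂` is dense
  -- in `B`.
  obtain ⟨U, hU, hUeq⟩ := h _ (denseIn_union_diff_closure (hT₁B.trans hBA))
  obtain ⟨t, ht⟩ := closure_nonempty_iff.mp ⟨b, hBT₁ hb⟩
  have htU : t ∈ U := (hUeq ▸ Or.inl ht : t ∈ U ∩ A).1
  obtain ⟨z, hzU, hz⟩ := mem_closure_iff.mp (hBT₂ (hT₁B ht)) U hU htU
  have hzT : z ∈ T₁ ∪ (A \ closure T₁) := hUeq ▸ ⟨hzU, hBA (hT₂B hz)⟩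
  rcases hzT with hz₁ | hz₁
  · exact disjoint_left.mp hd hz₁ hz
  · exact hz₁.2 (hBT₁ (hT₂B hz))

theorem ResolvCard.nonempty {μ : Cardinal.{u}} {S : Set X} (h : ResolvCard μ S) (hμ : 1 < μ) :
    S.Nonempty := by
  obtain ⟨𝒮, rfl, -, h𝒮⟩ := h
  rw [nonempty_iff_ne_empty]
  rintro rfl
  have h𝒮' : 𝒮 ⊆ {∅} := fun T hT => subset_empty_iff.mp (h𝒮 T hT).1
  exact hμ.not_ge ((mk_le_mk_of_subset h𝒮').trans (mk_singleton _).le)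

theorem ResolvCard.exists_pairwise_disjoint {m : ℕ} {S : Set X}
    (h : ResolvCard (m : Cardinal.{u}) S) :
    ∃ D : Fin m → Set X, Pairwise (Disjoint on D) ∧ ∀ j, DenseIn (D j) S := by
  obtain ⟨𝒮, h𝒮, hd, hD⟩ := h
  obtain ⟨e⟩ := mk_eq_nat_iff.mp h𝒮
  refine ⟨fun j => e.symm j, fun j k hjk => hd (e.symm j).2 (e.symm k).2 ?_,
    fun j => hD _ (e.symm j).2⟩
  exact fun h => hjk (e.symm.injective (Subtype.val_injective h))

theorem not_resolvCard_of_subset_iUnion_heredIrres {ι : Type*} [Finite ι] {m : ℕ} (hm : 1 < m)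
    (hιm : Nat.card ι < m) {S : Set X} (A : ι → Set X) (hA : S ⊆ ⋃ i, A i)
    (hHI : ∀ i, HeredIrres (A i)) : ¬ ResolvCard (m : Cardinal.{u}) S := fun h => by
  obtain ⟨D, hDd, hD⟩ := h.exists_pairwise_disjoint
  obtain ⟨i, hi⟩ := exists_not_heredIrres_of_denseIn_of_pairwise_disjoint
    (h.nonempty (by exact_mod_cast hm)) A hA D hD hDd (by simpa using hιm)
  exact hi (hHI i)

/-- (1) If a crowded space is the union of at most `n ≥ 1` hereditarily irresolvable
subspaces then it is not `(n+1)`-resolvable. (2) Consequently, a space that is the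
disjoint union of `n` dense submaximal subspaces contains no `(n+1)`-resolvable
subspace. -/
theorem stmt_17 (n : ℕ) (hn : 1 ≤ n) :
    (∀ (Y : Type u) [TopologicalSpace Y], ∀ A : Fin n → Set Y,
      (∀ x : Y, x ∈ closure {y | y ≠ x}) → (⋃ i, A i) = Set.univ →
      (∀ i, HeredIrres (A i)) →
      ¬ ResolvCard ((n + 1 : ℕ) : Cardinal.{u}) (Set.univ : Set Y)) ∧
    (∀ (Y : Type u) [TopologicalSpace Y], ∀ A : Fin n → Set Y,
      (⋃ i, A i) = Set.univ → Pairwise (Function.onFun Disjoint A) →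
      (∀ i, Dense (A i) ∧ SubmaximalIn (A i)) →
      ∀ S : Set Y, ¬ ResolvCard ((n + 1 : ℕ) : Cardinal.{u}) S) := by
  refine ⟨fun Y _ A _ hcov hHI => ?_, fun Y _ A hcov _ hA S => ?_⟩
  · exact not_resolvCard_of_subset_iUnion_heredIrres (by omega) (by simp) A hcov.ge hHI
  · exact not_resolvCard_of_subset_iUnion_heredIrres (by omega) (by simp) A
      (hcov ▸ subset_univ S) fun i => (hA i).2.heredIrres
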